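/- Let x < y and let h : [0,1] → [0,1] satisfy C_{x,y}(h) ≥ 2n, yielding labeled points (x₁,0),(x₂,1),…,(x_{2n}) alternating with h(x_j) = x for odd j and h(x_j) = y for even j. If g : [0,1] → ℝ is piecewise monotone with at most P pieces and P ≤ n/4, then the classification error R(g) = (1/(2n)) Σᵢ 1[1[g(xᵢ) ≥ (x+y)/2] ≠ yᵢ] satisfies R(g) ≥ 1/2 - 2P/(2n) ≥ 1/4. -/

import Mathlib

/-!
Split the `2n` points into the consecutive pairs `(x_{2k}, x_{2k+1})`, labelled `(0, 1)`.
Every pair on which `g` makes no error is *rising*: `g` crosses the threshold upwards between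
its two points. A rising pair either lies inside one piece — an increasing piece contains at most
one, since `g` cannot drop below the threshold again in between, and a decreasing piece none —
or its second point leaves the piece containing its first, which by convexity happens for at most
one pair per piece. So at most `2P` pairs are rising and at least `n - 2P` points are misclassified.
-/

/-- `g` is piecewise monotone on `[0,1]` with at most `P` pieces: `[0,1]` is split by
breakpoints `0 = c 0 ≤ c 1 ≤ ⋯ ≤ c m = 1` (with `m ≤ P`) into intervals on each of which
`g` is monotone (nondecreasing or nonincreasing). -/
def IsPiecewiseMonotoneWith (g : ℝ → ℝ) (P : ℕ) : Prop :=
  ∃ m : ℕ, m ≤ P ∧ ∃ c : Fin (m + 1) → ℝ, Monotone c ∧ c 0 = 0 ∧ c (Fin.last m) = 1 ∧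
    ∀ i : Fin m, MonotoneOn g (Set.Icc (c i.castSucc) (c i.succ)) ∨
      AntitoneOn g (Set.Icc (c i.castSucc) (c i.succ))

open Finset

section RisingPairs

variable {ι κ α β : Type*} [LinearOrder ι] [Fintype ι] [LinearOrder α] [LinearOrder β]
  {a b : ι → α} {g : α → β} {t : β} {s : Set α} [DecidablePred (· ∈ s)]

lemma card_filter_le_one_of_forall_lt {p : ι → Prop} [DecidablePred p]
    (h : ∀ k k', k < k' → p k → p k' → False) : #{k | p k} ≤ 1 := by
  refine Finset.card_le_one.2 fun k hk k' hk' => ?_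
  simp only [Finset.mem_filter, Finset.mem_univ, true_and] at hk hk'
  rcases lt_trichotomy k k' with hlt | heq | hgt
  exacts [(h k k' hlt hk hk').elim, heq, (h k' k hgt hk' hk).elim]

lemma card_rising_pairs_mem_le_one (hg : MonotoneOn g s ∨ AntitoneOn g s)
    (hab : ∀ k, a k ≤ b k) (hba : ∀ k k', k < k' → b k ≤ a k') :
    #{k | (a k ∈ s ∧ b k ∈ s) ∧ g (a k) < t ∧ t ≤ g (b k)} ≤ 1 := by
  refine card_filter_le_one_of_forall_lt
    fun k k' hlt ⟨⟨hak, hbk⟩, hka, hkb⟩ ⟨⟨hak', _⟩, hk'a, _⟩ => ?_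
  rcases hg with hmono | hanti
  · exact (hkb.trans (hmono hbk hak' (hba k k' hlt))).not_gt hk'a
  · exact (hkb.trans (hanti hak hbk (hab k))).not_gt hka

lemma card_pairs_exiting_le_one (hs : s.OrdConnected)
    (hab : ∀ k, a k ≤ b k) (hba : ∀ k k', k < k' → b k ≤ a k') :
    #{k | a k ∈ s ∧ b k ∉ s} ≤ 1 :=
  card_filter_le_one_of_forall_lt fun k k' hlt ⟨hak, hbk⟩ ⟨hak', _⟩ =>
    hbk (hs.out hak hak' ⟨hab k, hba k k' hlt⟩)

lemma card_rising_pairs_le [Fintype κ] {I : κ → Set α} (hI : ∀ j, (I j).OrdConnected)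
    (hg : ∀ j, MonotoneOn g (I j) ∨ AntitoneOn g (I j)) (hcover : ∀ k, ∃ j, a k ∈ I j)
    (hab : ∀ k, a k ≤ b k) (hba : ∀ k k', k < k' → b k ≤ a k') :
    #{k | g (a k) < t ∧ t ≤ g (b k)} ≤ Fintype.card κ * 2 := by
  classical
  let stay j := ({k | (a k ∈ I j ∧ b k ∈ I j) ∧ g (a k) < t ∧ t ≤ g (b k)} : Finset ι)
  let exiting j := ({k | a k ∈ I j ∧ b k ∉ I j} : Finset ι)
  have hsub : ({k | g (a k) < t ∧ t ≤ g (b k)} : Finset ι) ⊆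
      univ.biUnion fun j => stay j ∪ exiting j := by
    intro k hk
    obtain ⟨j, hj⟩ := hcover k
    simp only [Finset.mem_filter, Finset.mem_univ, true_and, Finset.mem_biUnion,
      Finset.mem_union, stay, exiting] at hk ⊢
    by_cases hbj : b k ∈ I j
    exacts [⟨j, .inl ⟨⟨hj, hbj⟩, hk⟩⟩, ⟨j, .inr ⟨hj, hbj⟩⟩]
  refine (card_le_card hsub).trans (card_biUnion_le_card_mul _ _ 2 fun j _ => ?_)
  exact (card_union_le _ _).trans (add_le_add (card_rising_pairs_mem_le_one (hg j) hab hba)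
    (card_pairs_exiting_le_one (hI j) hab hba))

end RisingPairs

lemma Monotone.exists_mem_Icc_castSucc_succ {α : Type*} [LinearOrder α] {m : ℕ}
    {c : Fin (m + 1) → α} (hc : Monotone c) (hm : m ≠ 0) {x : α}
    (hx : x ∈ Set.Icc (c 0) (c (Fin.last m))) :
    ∃ j : Fin m, x ∈ Set.Icc (c j.castSucc) (c j.succ) := by
  classical
  let above : Finset (Fin (m + 1)) := {i | x ≤ c i}
  have hne : above.Nonempty := ⟨Fin.last m, by simpa [above] using hx.2⟩
  have hmin : x ≤ c (above.min' hne) := by simpa [above] using above.min'_mem hne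
  cases hj : above.min' hne using Fin.cases with
  | zero =>
    have hx0 : x = c 0 := le_antisymm (hj ▸ hmin) hx.1
    exact ⟨⟨0, Nat.pos_of_ne_zero hm⟩, hx0.ge, hx0 ▸ hc (Fin.zero_le _)⟩
  | succ i =>
    refine ⟨i, le_of_not_ge fun hle => ?_, hj ▸ hmin⟩
    have := above.min'_le i.castSucc (by simpa [above] using hle)
    exact Fin.castSucc_lt_succ.not_ge (hj ▸ this)

def evenIndex {n : ℕ} (k : Fin n) : Fin (2 * n) := ⟨2 * k, by omega⟩

def oddIndex {n : ℕ} (k : Fin n) : Fin (2 * n) := ⟨2 * k + 1, by omega⟩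

lemma evenIndex_lt_oddIndex {n : ℕ} (k : Fin n) : evenIndex k < oddIndex k :=
  Fin.lt_def.2 (Nat.lt_succ_self _)

lemma oddIndex_lt_evenIndex {n : ℕ} {k k' : Fin n} (h : k < k') : oddIndex k < evenIndex k' :=
  Fin.lt_def.2 (by simp only [evenIndex, oddIndex]; omega)

lemma le_card_errors_add_card_rising {β : Type*} [LinearOrder β] {n : ℕ}
    (v : Fin (2 * n) → β) (t : β) :
    n ≤ #{i | (if t ≤ v i then (1:ℕ) else 0) ≠ (if (i : ℕ) % 2 = 0 then 0 else 1)} +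
      #{k : Fin n | v (evenIndex k) < t ∧ t ≤ v (oddIndex k)} := by
  let misclassified k := if t ≤ v (evenIndex k) then evenIndex k else oddIndex k
  have hnonrising : #{k : Fin n | ¬(v (evenIndex k) < t ∧ t ≤ v (oddIndex k))} ≤
      #{i | (if t ≤ v i then (1:ℕ) else 0) ≠ (if (i : ℕ) % 2 = 0 then 0 else 1)} := by
    refine card_le_card_of_injOn misclassified (fun k hk => ?_) (fun k _ k' _ hkk' => ?_)
    · simp only [coe_filter, Finset.mem_univ, true_and, Set.mem_ofPred_eq, not_and, not_le]
        at hk ⊢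
      by_cases hk0 : t ≤ v (evenIndex k)
      · simp only [misclassified, if_pos hk0]
        simp [evenIndex]
      · simp only [misclassified, if_neg hk0, if_neg (hk (lt_of_not_ge hk0)).not_ge]
        simp [oddIndex, Nat.add_mod]
    · have hdiv : ∀ k, (misclassified k : ℕ) / 2 = k := fun k => by
        simp only [misclassified]; split <;> simp only [evenIndex, oddIndex] <;> omega
      exact Fin.ext (by rw [← hdiv k, ← hdiv k', hkk'])
  have hsplit := card_filter_add_card_filter_not
    (s := (univ : Finset (Fin n))) fun k => v (evenIndex k) < t ∧ t ≤ v (oddIndex k)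
  simp only [card_univ, Fintype.card_fin] at hsplit
  omega

lemma error_rate_bounds {n P e : ℕ} (hn : 1 ≤ n) (hPn : 4 * P ≤ n) (he : n ≤ e + 2 * P) :
    (1:ℝ)/2 - 2 * P / (2 * n) ≤ e / (2 * n) ∧ (1:ℝ)/4 ≤ e / (2 * n) := by
  have hn' : (0:ℝ) < 2 * n := by positivity
  have hPn' : (4 * P : ℝ) ≤ n := by exact_mod_cast hPn
  have he' : (n : ℝ) ≤ e + 2 * P := by exact_mod_cast he
  have hfirst : (1:ℝ)/2 - 2 * P / (2 * n) ≤ e / (2 * n) := by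
    calc (1:ℝ)/2 - 2 * P / (2 * n) = (n - 2 * P) / (2 * n) := by field_simp
      _ ≤ e / (2 * n) := by gcongr; linarith
  refine ⟨hfirst, le_trans ?_ hfirst⟩
  have : 2 * (P : ℝ) / (2 * n) ≤ 1 / 4 := by rw [div_le_iff₀ hn']; linarith
  linarith

theorem piecewise_monotone_classification_error_general (n : ℕ) (hn : 1 ≤ n)
    (x y : ℝ)
    (pts : Fin (2 * n) → ℝ) (hpts : StrictMono pts)
    (hpts01 : ∀ i, pts i ∈ Set.Icc (0:ℝ) 1)
    (g : ℝ → ℝ) (P : ℕ) (hP : IsPiecewiseMonotoneWith g P) (hPn : 4 * P ≤ n) :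
    (1:ℝ)/2 - 2 * P / (2 * n) ≤
      ((Finset.univ.filter fun i : Fin (2 * n) =>
          (if (x + y) / 2 ≤ g (pts i) then (1:ℕ) else 0) ≠
          (if (i : ℕ) % 2 = 0 then 0 else 1)).card : ℝ) / (2 * n) ∧
    (1:ℝ)/4 ≤
      ((Finset.univ.filter fun i : Fin (2 * n) =>
          (if (x + y) / 2 ≤ g (pts i) then (1:ℕ) else 0) ≠
          (if (i : ℕ) % 2 = 0 then 0 else 1)).card : ℝ) / (2 * n) := by
  obtain ⟨m, hmP, c, hc, hc0, hc1, hpieces⟩ := hP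
  have hm : m ≠ 0 := by
    rintro rfl
    exact zero_ne_one (hc0.symm.trans hc1)
  have hcover (k : Fin n) :
      ∃ j : Fin m, pts (evenIndex k) ∈ Set.Icc (c j.castSucc) (c j.succ) :=
    hc.exists_mem_Icc_castSucc_succ hm (hc0 ▸ hc1 ▸ hpts01 (evenIndex k))
  have hrising := card_rising_pairs_le (t := (x + y) / 2) (fun _ => Set.ordConnected_Icc)
    hpieces hcover (fun k => (hpts (evenIndex_lt_oddIndex k)).le)
    (fun _ _ hkk' => (hpts (oddIndex_lt_evenIndex hkk')).le)
  have hcount := le_card_errors_add_card_rising (fun i => g (pts i)) ((x + y) / 2)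
  rw [Fintype.card_fin] at hrising
  exact error_rate_bounds hn hPn (by omega)

/-- The counting lemma: given `2n` increasing points in `[0,1]` with alternating labels
(label `0` at odd positions `j = 1,3,…`, i.e. even `0`-based indices, where `h` takes the
value `x`; label `1` at even positions, where `h` takes the value `y`), any piecewise
monotone `g` with at most `P ≤ n/4` pieces has classification error
`R(g) ≥ 1/2 - 2P/(2n) ≥ 1/4`. -/
theorem piecewise_monotone_classification_error (n : ℕ) (hn : 1 ≤ n)
    (x y : ℝ) (hxy : x < y) (h : ℝ → ℝ)
    (pts : Fin (2 * n) → ℝ) (hpts : StrictMono pts)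
    (hpts01 : ∀ i, pts i ∈ Set.Icc (0:ℝ) 1)
    (hh : ∀ i : Fin (2 * n), h (pts i) = if (i : ℕ) % 2 = 0 then x else y)
    (g : ℝ → ℝ) (P : ℕ) (hP : IsPiecewiseMonotoneWith g P) (hPn : 4 * P ≤ n) :
    (1:ℝ)/2 - 2 * P / (2 * n) ≤
      ((Finset.univ.filter fun i : Fin (2 * n) =>
          (if (x + y) / 2 ≤ g (pts i) then (1:ℕ) else 0) ≠
          (if (i : ℕ) % 2 = 0 then 0 else 1)).card : ℝ) / (2 * n) ∧
    (1:ℝ)/4 ≤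
      ((Finset.univ.filter fun i : Fin (2 * n) =>
          (if (x + y) / 2 ≤ g (pts i) then (1:ℕ) else 0) ≠
          (if (i : ℕ) % 2 = 0 then 0 else 1)).card : ℝ) / (2 * n) :=
  piecewise_monotone_classification_error_general n hn x y pts hpts hpts01 g P hP hPn
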